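/- arXiv:1510.06974 — 2 statements merged into one kernel-verified Lean document; each statement's English description precedes it below -/
import Mathlib

section
/- Let λ be a 2×2 symmetric positive definite matrix-valued function on a domain in ℝ² with det λ = ρ², parametrized as λ₁₁ = (√(ρ²+z²) − z)e^V cosh W, λ₂₂ = (√(ρ²+z²) + z)e^{−V}cosh W, λ₁₂ = ρ sinh W. Then, with h₂ = (1/2)log((√(ρ²+z²)−z)/(√(ρ²+z²)+z)), the following pointwise identity holds for ρ > 0: −(1/ρ²)·(⟨∇λ₁₁, ∇λ₂₂⟩ − |∇λ₁₂|²) = |∇V|² + |∇W|² + sinh²W·|∇(V+h₂)|² + 2⟨∇h₂, ∇V⟩, where ∇ and ⟨·,·⟩ are the flat gradient and inner product in the variables (ρ,z). -/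
open Real

/-- Partial derivative in the first (ρ) variable. -/
noncomputable def pdρ (f : ℝ → ℝ → ℝ) (ρ z : ℝ) : ℝ := deriv (fun p => f p z) ρ

/-- Partial derivative in the second (z) variable. -/
noncomputable def pdz (f : ℝ → ℝ → ℝ) (ρ z : ℝ) : ℝ := deriv (fun q => f ρ q) z

/-- Flat inner product of (ρ,z)-gradients. -/
noncomputable def gradInner (f g : ℝ → ℝ → ℝ) (ρ z : ℝ) : ℝ :=
  pdρ f ρ z * pdρ g ρ z + pdz f ρ z * pdz g ρ z

set_option maxHeartbeats 2000000 in
/-- for `λ` parametrized by `λ₁₁ = (√(ρ²+z²)−z)e^V cosh W`,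
`λ₂₂ = (√(ρ²+z²)+z)e^{−V} cosh W`, `λ₁₂ = ρ sinh W` (so `det λ = ρ²`), and
`h₂ = (1/2)log((√(ρ²+z²)−z)/(√(ρ²+z²)+z))`, one has the pointwise identity for `ρ > 0`:
`−(1/ρ²)(⟨∇λ₁₁,∇λ₂₂⟩ − |∇λ₁₂|²) = |∇V|² + |∇W|² + sinh²W |∇(V+h₂)|² + 2⟨∇h₂,∇V⟩`. -/
theorem det_grad_lambda_identity (V W : ℝ → ℝ → ℝ)
    (hV : ContDiff ℝ (⊤ : ℕ∞) (fun p : ℝ × ℝ => V p.1 p.2))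
    (hW : ContDiff ℝ (⊤ : ℕ∞) (fun p : ℝ × ℝ => W p.1 p.2))
    (ρ z : ℝ) (hρ : 0 < ρ) :
    let l11 : ℝ → ℝ → ℝ := fun p q =>
      (Real.sqrt (p^2 + q^2) - q) * Real.exp (V p q) * Real.cosh (W p q)
    let l22 : ℝ → ℝ → ℝ := fun p q =>
      (Real.sqrt (p^2 + q^2) + q) * Real.exp (-(V p q)) * Real.cosh (W p q)
    let l12 : ℝ → ℝ → ℝ := fun p q => p * Real.sinh (W p q)
    let h₂ : ℝ → ℝ → ℝ := fun p q =>
      (1/2) * Real.log ((Real.sqrt (p^2 + q^2) - q) / (Real.sqrt (p^2 + q^2) + q));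
    -(1/ρ^2) * (gradInner l11 l22 ρ z - gradInner l12 l12 ρ z)
      = gradInner V V ρ z + gradInner W W ρ z
        + Real.sinh (W ρ z) ^ 2
          * gradInner (fun p q => V p q + h₂ p q) (fun p q => V p q + h₂ p q) ρ z
        + 2 * gradInner h₂ V ρ z := by
  intro l11 l22 l12 h₂
  have hρz : (0:ℝ) < ρ^2 + z^2 := by nlinarith [sq_nonneg z]
  have hs0 : 0 < Real.sqrt (ρ^2 + z^2) := Real.sqrt_pos.mpr hρz
  set s := Real.sqrt (ρ^2 + z^2) with hs_def
  have hs2 : s^2 = ρ^2 + z^2 := Real.sq_sqrt hρz.le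
  have hzs : z < s := by nlinarith
  have hzs' : -s < z := by nlinarith
  have hu0 : (0:ℝ) < s - z := by linarith
  have hv0 : (0:ℝ) < s + z := by linarith
  have hVd : Differentiable ℝ (fun p : ℝ × ℝ => V p.1 p.2) := hV.differentiable (by simp)
  have hWd : Differentiable ℝ (fun p : ℝ × ℝ => W p.1 p.2) := hW.differentiable (by simp)
  have hVρ : HasDerivAt (fun p => V p z) (pdρ V ρ z) ρ :=
    ((hVd.comp (differentiable_id.prodMk (differentiable_const z))).differentiableAt).hasDerivAt
  have hVz : HasDerivAt (fun q => V ρ q) (pdz V ρ z) z :=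
    ((hVd.comp ((differentiable_const ρ).prodMk differentiable_id)).differentiableAt).hasDerivAt
  have hWρ : HasDerivAt (fun p => W p z) (pdρ W ρ z) ρ :=
    ((hWd.comp (differentiable_id.prodMk (differentiable_const z))).differentiableAt).hasDerivAt
  have hWz : HasDerivAt (fun q => W ρ q) (pdz W ρ z) z :=
    ((hWd.comp ((differentiable_const ρ).prodMk differentiable_id)).differentiableAt).hasDerivAt
  set Vρ := pdρ V ρ z
  set Vz := pdz V ρ z
  set Wρ := pdρ W ρ z
  set Wz := pdz W ρ z
  -- derivative of sqrt in each direction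
  have hsρ : HasDerivAt (fun p : ℝ => Real.sqrt (p^2 + z^2)) (ρ/s) ρ := by
    have hq : HasDerivAt (fun p : ℝ => p^2 + z^2) (2*ρ) ρ := by
      simpa using (hasDerivAt_pow 2 ρ).add_const (z^2)
    have h := (Real.hasDerivAt_sqrt hρz.ne').comp ρ hq
    rw [← hs_def] at h
    have : 1 / (2 * s) * (2*ρ) = ρ / s := by
      field_simp
    exact this ▸ h
  have hsz : HasDerivAt (fun q : ℝ => Real.sqrt (ρ^2 + q^2)) (z/s) z := by
    have hq : HasDerivAt (fun q : ℝ => ρ^2 + q^2) (2*z) z := by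
      simpa using ((hasDerivAt_pow 2 z).const_add (ρ^2))
    have h := (Real.hasDerivAt_sqrt hρz.ne').comp z hq
    rw [← hs_def] at h
    have : 1 / (2 * s) * (2*z) = z / s := by
      field_simp
    exact this ▸ h
  -- eight derivatives
  have e11ρ : pdρ l11 ρ z = (ρ/s) * Real.exp (V ρ z) * Real.cosh (W ρ z)
      + (s - z) * Real.exp (V ρ z) * Real.cosh (W ρ z) * Vρ
      + (s - z) * Real.exp (V ρ z) * Real.sinh (W ρ z) * Wρ := by
    have h := ((hsρ.sub_const z).mul hVρ.exp).mul hWρ.cosh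
    rw [← hs_def] at h
    have := h.deriv
    simp only [Pi.mul_apply, Pi.sub_apply, Pi.add_apply, Pi.neg_apply, Pi.div_apply, id_eq] at this
    rw [show pdρ l11 ρ z = deriv (fun p => (Real.sqrt (p^2+z^2) - z) * Real.exp (V p z) * Real.cosh (W p z)) ρ from rfl]
    exact this.trans (by ring)

  have hv0' : s + z ≠ 0 := hv0.ne'
  have hu0' : s - z ≠ 0 := hu0.ne'
  -- h₂ derivatives
  have hh2ρ : HasDerivAt (fun p => (1/2 : ℝ) * Real.log ((Real.sqrt (p^2+z^2) - z)/(Real.sqrt (p^2+z^2) + z))) (z/(s*ρ)) ρ := by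
    have h := HasDerivAt.const_mul (1/2 : ℝ)
      (((hsρ.sub_const z).div (hsρ.add_const z) hv0').log (div_ne_zero hu0' hv0'))
    simp only [Pi.mul_apply, Pi.sub_apply, Pi.add_apply, Pi.neg_apply, Pi.div_apply, id_eq] at h
    rw [← hs_def] at h
    refine h.congr_deriv ?_
    field_simp
    grind
  have hh2z : HasDerivAt (fun q => (1/2 : ℝ) * Real.log ((Real.sqrt (ρ^2+q^2) - q)/(Real.sqrt (ρ^2+q^2) + q))) (-(1/s)) z := by
    have h := HasDerivAt.const_mul (1/2 : ℝ)
      (((hsz.sub (hasDerivAt_id z)).div (hsz.add (hasDerivAt_id z)) hv0').log (div_ne_zero hu0' hv0'))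
    simp only [Pi.mul_apply, Pi.sub_apply, Pi.add_apply, Pi.neg_apply, Pi.div_apply, id_eq] at h
    rw [← hs_def] at h
    refine h.congr_deriv ?_
    field_simp
    grind
  have e11z : pdz l11 ρ z = (z/s - 1) * Real.exp (V ρ z) * Real.cosh (W ρ z)
      + (s - z) * Real.exp (V ρ z) * Real.cosh (W ρ z) * Vz
      + (s - z) * Real.exp (V ρ z) * Real.sinh (W ρ z) * Wz := by
    have h := (((hsz.sub (hasDerivAt_id' z)).mul hVz.exp).mul hWz.cosh)
    simp only [Pi.mul_apply, Pi.sub_apply, Pi.add_apply, Pi.neg_apply, Pi.div_apply, id_eq] at h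
    rw [← hs_def] at h
    have := h.deriv
    rw [show pdz l11 ρ z = deriv (fun q => (Real.sqrt (ρ^2+q^2) - q) * Real.exp (V ρ q) * Real.cosh (W ρ q)) z from rfl]
    exact this.trans (by ring)
  have e22ρ : pdρ l22 ρ z = (ρ/s) * Real.exp (-(V ρ z)) * Real.cosh (W ρ z)
      - (s + z) * Real.exp (-(V ρ z)) * Real.cosh (W ρ z) * Vρ
      + (s + z) * Real.exp (-(V ρ z)) * Real.sinh (W ρ z) * Wρ := by
    have h := (((hsρ.add_const z).mul hVρ.neg.exp).mul hWρ.cosh)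
    rw [← hs_def] at h
    have := h.deriv
    simp only [Pi.mul_apply, Pi.sub_apply, Pi.add_apply, Pi.neg_apply, Pi.div_apply, id_eq] at this
    rw [show pdρ l22 ρ z = deriv (fun p => (Real.sqrt (p^2+z^2) + z) * Real.exp (-(V p z)) * Real.cosh (W p z)) ρ from rfl]
    exact this.trans (by ring)
  have e22z : pdz l22 ρ z = (z/s + 1) * Real.exp (-(V ρ z)) * Real.cosh (W ρ z)
      - (s + z) * Real.exp (-(V ρ z)) * Real.cosh (W ρ z) * Vz
      + (s + z) * Real.exp (-(V ρ z)) * Real.sinh (W ρ z) * Wz := by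
    have h := (((hsz.add (hasDerivAt_id' z)).mul hVz.neg.exp).mul hWz.cosh)
    simp only [Pi.mul_apply, Pi.sub_apply, Pi.add_apply, Pi.neg_apply, Pi.div_apply, id_eq] at h
    rw [← hs_def] at h
    have := h.deriv
    rw [show pdz l22 ρ z = deriv (fun q => (Real.sqrt (ρ^2+q^2) + q) * Real.exp (-(V ρ q)) * Real.cosh (W ρ q)) z from rfl]
    exact this.trans (by ring)
  have e12ρ : pdρ l12 ρ z = Real.sinh (W ρ z) + ρ * Real.cosh (W ρ z) * Wρ := by
    have h := (hasDerivAt_id' ρ).mul hWρ.sinh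
    have := h.deriv
    rw [show pdρ l12 ρ z = deriv (fun p => p * Real.sinh (W p z)) ρ from rfl]
    exact this.trans (by ring)
  have e12z : pdz l12 ρ z = ρ * Real.cosh (W ρ z) * Wz := by
    have h := HasDerivAt.const_mul ρ hWz.sinh
    have := h.deriv
    rw [show pdz l12 ρ z = deriv (fun q => ρ * Real.sinh (W ρ q)) z from rfl]
    rw [this]; ring
  have eh2ρ : pdρ h₂ ρ z = z/(s*ρ) := hh2ρ.deriv
  have eh2z : pdz h₂ ρ z = -(1/s) := hh2z.deriv
  have eSρ : pdρ (fun p q => V p q + h₂ p q) ρ z = Vρ + z/(s*ρ) := (hVρ.add hh2ρ).deriv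
  have eSz : pdz (fun p q => V p q + h₂ p q) ρ z = Vz + -(1/s) := (hVz.add hh2z).deriv
  simp only [gradInner]
  rw [e11ρ, e11z, e22ρ, e22z, e12ρ, e12z, eh2ρ, eh2z, eSρ, eSz, Real.exp_neg]
  rw [show pdρ V ρ z = Vρ from rfl, show pdz V ρ z = Vz from rfl,
      show pdρ W ρ z = Wρ from rfl, show pdz W ρ z = Wz from rfl]
  have hE0 : Real.exp (V ρ z) ≠ 0 := Real.exp_ne_zero _
  have hc : Real.cosh (W ρ z)^2 = Real.sinh (W ρ z)^2 + 1 := Real.cosh_sq _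
  field_simp
  grind
end

section
/- In the metric ds² = 12du² + cosh²w dv² + dw² + (e^{−6u−v}/cosh w)(dζ¹)² + e^{−6u+v}cosh w (e^{−v}tanh w dζ¹ − dζ²)² on ℝ⁵, for constants v₀, w₀, ζ¹₀, ζ²₀, the curve t ↦ (u₀ + t(u₁−u₀), v₀, w₀, ζ¹₀, ζ²₀) is a geodesic, and the distance between (u₀,v₀,w₀,ζ¹₀,ζ²₀) and (u₁,v₀,w₀,ζ¹₀,ζ²₀) equals √12·|u₁ − u₀|. -/
open Real

/-- The Riemannian metric
`ds² = 12du² + cosh²w dv² + dw² + (e^{−6u−v}/cosh w)(dζ¹)²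
     + e^{−6u+v} cosh w (e^{−v} tanh w dζ¹ − dζ²)²`
on `ℝ⁵` (the model of `SL(3,ℝ)/SO(3)`), as a quadratic form in the tangent vector `X`
at the point `p = (u,v,w,ζ¹,ζ²)`. -/
noncomputable def metricQ (p X : ℝ × ℝ × ℝ × ℝ × ℝ) : ℝ :=
  12 * X.1^2 + Real.cosh p.2.2.1 ^ 2 * X.2.1^2 + X.2.2.1^2
    + (Real.exp (-6*p.1 - p.2.1) / Real.cosh p.2.2.1) * X.2.2.2.1^2
    + Real.exp (-6*p.1 + p.2.1) * Real.cosh p.2.2.1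
      * (Real.exp (-p.2.1) * Real.tanh p.2.2.1 * X.2.2.2.1 - X.2.2.2.2)^2

lemma metricQ_lower (p X : ℝ × ℝ × ℝ × ℝ × ℝ) : 12 * X.1^2 ≤ metricQ p X := by
  unfold metricQ
  have h1 : (0:ℝ) < Real.cosh p.2.2.1 := Real.cosh_pos _
  nlinarith [sq_nonneg X.2.1, sq_nonneg X.2.2.1, sq_nonneg X.2.2.2.1,
    sq_nonneg (Real.exp (-p.2.1) * Real.tanh p.2.2.1 * X.2.2.2.1 - X.2.2.2.2),
    Real.exp_pos (-6*p.1 - p.2.1), Real.exp_pos (-6*p.1 + p.2.1),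
    mul_pos (Real.exp_pos (-6*p.1 + p.2.1)) h1,
    div_pos (Real.exp_pos (-6*p.1 - p.2.1)) h1]

lemma sqrt12 (d : ℝ) : Real.sqrt (12 * d^2) = Real.sqrt 12 * |d| := by
  rw [Real.sqrt_mul (by norm_num), Real.sqrt_sq_eq_abs]

/-- for constants `v₀, w₀, ζ¹₀, ζ²₀`, the straight line
`γ(t) = (u₀ + t(u₁−u₀), v₀, w₀, ζ¹₀, ζ²₀)` is a (minimizing) geodesic of the metric
`ds²` above: it has constant speed `√12|u₁−u₀|`, its length equals `√12·|u₁−u₀|`, and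
any `C¹` competitor curve joining the same endpoints has length at least
`√12·|u₁−u₀|`, so the distance between `(u₀,v₀,w₀,ζ¹₀,ζ²₀)` and `(u₁,v₀,w₀,ζ¹₀,ζ²₀)`
equals `√12·|u₁−u₀|`. -/
theorem u_line_is_minimizing_geodesic (u₀ u₁ v₀ w₀ ζ₁₀ ζ₂₀ : ℝ) :
    let γ : ℝ → ℝ × ℝ × ℝ × ℝ × ℝ := fun t => (u₀ + t*(u₁ - u₀), v₀, w₀, ζ₁₀, ζ₂₀)
    (∀ t : ℝ, metricQ (γ t) (deriv γ t) = 12 * (u₁ - u₀)^2) ∧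
    (∫ t in (0:ℝ)..1, Real.sqrt (metricQ (γ t) (deriv γ t)))
        = Real.sqrt 12 * |u₁ - u₀| ∧
    (∀ σ : ℝ → ℝ × ℝ × ℝ × ℝ × ℝ, ContDiff ℝ 1 σ → σ 0 = γ 0 → σ 1 = γ 1 →
      Real.sqrt 12 * |u₁ - u₀| ≤ ∫ t in (0:ℝ)..1, Real.sqrt (metricQ (σ t) (deriv σ t))) := by
  intro γ
  set d := u₁ - u₀ with hd
  have hγ : ∀ t : ℝ, HasDerivAt γ (d, 0, 0, 0, 0) t := by
    intro t
    have h := (((hasDerivAt_id t).mul_const d).const_add u₀).prodMk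
      (hasDerivAt_const t ((v₀, w₀, ζ₁₀, ζ₂₀) : ℝ × ℝ × ℝ × ℝ))
    simp [Prod.mk.injEq] at h; exact h
  have hderiv : ∀ t : ℝ, deriv γ t = (d, 0, 0, 0, 0) := fun t => (hγ t).deriv
  have hspeed : ∀ t : ℝ, metricQ (γ t) (deriv γ t) = 12 * d^2 := by
    intro t
    rw [hderiv t]
    simp [metricQ, γ]
  refine ⟨hspeed, ?_, ?_⟩
  · rw [intervalIntegral.integral_congr (g := fun _ => Real.sqrt (12 * d^2))
      (fun t _ => by rw [hspeed t])]
    simp [sqrt12, Real.sqrt_sq_eq_abs]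
  · intro σ hσ h0 h1
    have hdiff : Differentiable ℝ σ := hσ.differentiable one_ne_zero
    have hcd : Continuous (deriv σ) := hσ.continuous_deriv le_rfl
    set f : ℝ → ℝ := fun t => (deriv σ t).1 with hf
    have hf_cont : Continuous f := hcd.fst
    have hσ1 : ∀ t : ℝ, HasDerivAt (fun t => (σ t).1) (f t) t :=
      fun t => ((hdiff t).hasDerivAt).fst
    have hFTC : (∫ t in (0:ℝ)..1, f t) = (σ 1).1 - (σ 0).1 :=
      intervalIntegral.integral_eq_sub_of_hasDerivAt (fun t _ => hσ1 t)
        (hf_cont.intervalIntegrable _ _)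
    have hends : (σ 1).1 - (σ 0).1 = d := by
      rw [h0, h1]; simp [γ, hd]
    -- continuity of the integrand
    have hQcont : Continuous (fun t => metricQ (σ t) (deriv σ t)) := by
      unfold metricQ
      simp only [Real.tanh_eq_sinh_div_cosh]
      fun_prop (disch := intros; exact (Real.cosh_pos _).ne')
    have hQint : IntervalIntegrable (fun t => Real.sqrt (metricQ (σ t) (deriv σ t)))
        MeasureTheory.volume 0 1 := (hQcont.sqrt).intervalIntegrable _ _
    have hAbsInt : IntervalIntegrable (fun t => Real.sqrt 12 * |f t|)
        MeasureTheory.volume 0 1 :=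
      (continuous_const.mul hf_cont.abs).intervalIntegrable _ _
    have step1 : Real.sqrt 12 * |d| ≤ ∫ t in (0:ℝ)..1, Real.sqrt 12 * |f t| := by
      rw [← hends, ← hFTC]
      rw [intervalIntegral.integral_const_mul]
      have habs : |∫ t in (0:ℝ)..1, f t| ≤ ∫ t in (0:ℝ)..1, |f t| :=
        intervalIntegral.abs_integral_le_integral_abs (by norm_num)
      exact mul_le_mul_of_nonneg_left habs (Real.sqrt_nonneg 12)
    refine step1.trans (intervalIntegral.integral_mono_on (by norm_num) hAbsInt hQint ?_)
    intro t _
    calc Real.sqrt 12 * |f t| = Real.sqrt (12 * (f t)^2) := (sqrt12 _).symm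
      _ ≤ Real.sqrt (metricQ (σ t) (deriv σ t)) :=
          Real.sqrt_le_sqrt (metricQ_lower _ _)
end
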